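/- arXiv:1410.7635 — 2 statements merged into one kernel-verified Lean document; each statement's English description precedes it below -/
import Mathlib

section
/- There is a constant c > 0 such that for all n ∈ ℕ, all N ∈ ℕ, and all x ∈ I_s \ I_{s+1} with 0 ≤ s ≤ N−1, one has ∫_{I_N} |D_n(x − t)| dμ(t) ≤ c · 2^s / 2^N, where D_n is the Walsh-Paley Dirichlet kernel. -/
open MeasureTheory ENNReal Filter
open scoped Classical

noncomputable section

instance : TopologicalSpace (ZMod 2) := ⊥
instance : DiscreteTopology (ZMod 2) := ⟨rfl⟩
instance : MeasurableSpace (ZMod 2) := ⊤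
instance : BorelSpace (ZMod 2) := ⟨borel_eq_top_of_discrete.symm⟩
instance : IsTopologicalAddGroup (ZMod 2) where
  continuous_add := continuous_of_discreteTopology
  continuous_neg := continuous_of_discreteTopology

/-- The dyadic group `G = (ℤ/2)^ℕ`. -/
abbrev G2 : Type := ℕ → ZMod 2

/-- Normalized Haar (probability) measure on `G2`. -/
def muG : Measure G2 :=
  Measure.addHaarMeasure ⟨⟨Set.univ, isCompact_univ⟩, by
    rw [interior_univ]; exact Set.univ_nonempty⟩

/-- Rademacher functions. -/
def rad (k : ℕ) (x : G2) : ℝ := (-1 : ℝ) ^ ((x k).val)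

/-- Walsh–Paley functions. -/
def walsh (n : ℕ) (x : G2) : ℝ :=
  ∏ k ∈ Finset.range n, if n.testBit k then rad k x else 1

/-- Walsh–Dirichlet kernels. -/
def dirichlet (n : ℕ) (x : G2) : ℝ := ∑ k ∈ Finset.range n, walsh k x

/-- The cylinder sets `I_n`. -/
def cyl (n : ℕ) : Set G2 := {x | ∀ i < n, x i = 0}

/-- Walsh–Fourier coefficients. -/
def fhat (f : G2 → ℝ) (k : ℕ) : ℝ := ∫ x, f x * walsh k x ∂muG

/-- Walsh–Fourier partial sums of a function. -/
def funS (f : G2 → ℝ) (n : ℕ) (x : G2) : ℝ :=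
  ∑ k ∈ Finset.range n, fhat f k * walsh k x

/-- Partial sums of the Walsh series of a dyadic martingale given by coefficients `c`. -/
def mS (c : ℕ → ℝ) (n : ℕ) (x : G2) : ℝ := ∑ k ∈ Finset.range n, c k * walsh k x

/-- The martingale maximal function. -/
def mMax (c : ℕ → ℝ) (x : G2) : ℝ≥0∞ := ⨆ n : ℕ, (‖mS c (2 ^ n) x‖₊ : ℝ≥0∞)

/-- The martingale Hardy space quasi-norm `H_p`. -/
def mHp (p : ℝ) (c : ℕ → ℝ) : ℝ≥0∞ := (∫⁻ x, (mMax c x) ^ p ∂muG) ^ (1 / p)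

/-- The maximal function of an integrable function. -/
def funMax (f : G2 → ℝ) (x : G2) : ℝ≥0∞ := ⨆ n : ℕ, (‖funS f (2 ^ n) x‖₊ : ℝ≥0∞)

/-- The Hardy space quasi-norm of an integrable function. -/
def funHp (p : ℝ) (f : G2 → ℝ) : ℝ≥0∞ := (∫⁻ x, (funMax f x) ^ p ∂muG) ^ (1 / p)

/-- Weak `L^p` quasi-norm. -/
def weakLp (p : ℝ) (f : G2 → ℝ) : ℝ≥0∞ :=
  ⨆ t : NNReal, (t : ℝ≥0∞) * (muG {x | (t : ℝ) < |f x|}) ^ (1 / p)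


/-! For `y s ≠ 0`, the Paley recursion `D_{2^m + j} = D_{2^m} + r_m D_j` (for `j ≤ 2^m`) together
with `D_{2^m} = ∏_{i<m} (1 + r_i)`, which vanishes once `m > s`, gives `|D_n(y)| ≤ n mod 2^(s+1)`.
For `t ∈ I_N` and `s < N` the point `x - t` still has coordinate `s` nonzero, so the integrand is
bounded by `2^(s+1)` on `I_N`, and `I_N` is a subgroup of index `2^N`, hence of measure `2^(-N)`. -/

lemma abs_rad (k : ℕ) (x : G2) : |rad k x| = 1 := by
  simp [rad, abs_pow]

lemma rad_of_ne_zero {k : ℕ} {x : G2} (h : x k ≠ 0) : rad k x = -1 := by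
  have : (x k).val = 1 := by
    have := (x k).val_lt
    have := (ZMod.val_ne_zero (x k)).2 h
    omega
  simp [rad, this]

lemma walsh_eq_prod_range {n M : ℕ} (h : n ≤ M) (x : G2) :
    walsh n x = ∏ k ∈ Finset.range M, if n.testBit k then rad k x else 1 := by
  refine Finset.prod_subset (Finset.range_subset_range.2 h) fun i _ hi => ?_
  have : n < 2 ^ i := (Nat.lt_two_pow_self).trans_le
    (Nat.pow_le_pow_right two_pos (by simpa using hi))
  simp [Nat.testBit_eq_false_of_lt this]

lemma testBit_two_pow_add_of_ne {m j i : ℕ} (hj : j < 2 ^ m) (hi : i ≠ m) :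
    (2 ^ m + j).testBit i = j.testBit i := by
  rcases hi.lt_or_gt with hi | hi
  · exact Nat.testBit_two_pow_add_gt hi j
  · have : 2 ^ (m + 1) ≤ 2 ^ i := Nat.pow_le_pow_right two_pos hi
    rw [Nat.testBit_eq_false_of_lt (by rw [pow_succ] at this; omega),
      Nat.testBit_eq_false_of_lt (by omega)]

lemma walsh_two_pow_add {m j : ℕ} (hj : j < 2 ^ m) (x : G2) :
    walsh (2 ^ m + j) x = rad m x * walsh j x := by
  have hm : m ∈ Finset.range (2 ^ m + j) := Finset.mem_range.2 (by
    have := Nat.lt_two_pow_self (n := m); omega)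
  rw [walsh_eq_prod_range le_rfl, walsh_eq_prod_range (by omega : j ≤ 2 ^ m + j),
    ← Finset.mul_prod_erase _ _ hm, ← Finset.mul_prod_erase _ _ hm,
    Nat.testBit_two_pow_add_eq, Nat.testBit_eq_false_of_lt hj]
  simp only [Bool.not_false, if_true, Bool.false_eq_true, if_false, one_mul]
  exact congrArg _ (Finset.prod_congr rfl fun i hi =>
    by rw [testBit_two_pow_add_of_ne hj (Finset.ne_of_mem_erase hi)])

lemma dirichlet_two_pow_add {m j : ℕ} (hj : j ≤ 2 ^ m) (x : G2) :
    dirichlet (2 ^ m + j) x = dirichlet (2 ^ m) x + rad m x * dirichlet j x := by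
  rw [dirichlet, Finset.sum_range_add, dirichlet, dirichlet, Finset.mul_sum]
  exact congrArg _ (Finset.sum_congr rfl fun i hi =>
    walsh_two_pow_add ((Finset.mem_range.1 hi).trans_le hj) x)

lemma dirichlet_two_pow (m : ℕ) (x : G2) :
    dirichlet (2 ^ m) x = ∏ i ∈ Finset.range m, (1 + rad i x) := by
  induction m with
  | zero => simp [dirichlet, walsh]
  | succ m ih =>
    rw [pow_succ, mul_two, dirichlet_two_pow_add le_rfl, Finset.prod_range_succ, ih]
    ring

lemma abs_dirichlet_two_pow_le (m : ℕ) (x : G2) : |dirichlet (2 ^ m) x| ≤ 2 ^ m := by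
  rw [dirichlet_two_pow, Finset.abs_prod]
  calc ∏ i ∈ Finset.range m, |1 + rad i x| ≤ ∏ _i ∈ Finset.range m, (2 : ℝ) :=
        Finset.prod_le_prod (fun _ _ => abs_nonneg _) fun i _ =>
          (abs_add_le _ _).trans (by rw [abs_one, abs_rad]; norm_num)
    _ = 2 ^ m := by simp

lemma dirichlet_two_pow_eq_zero {m s : ℕ} (h : s < m) {x : G2} (hx : x s ≠ 0) :
    dirichlet (2 ^ m) x = 0 := by
  rw [dirichlet_two_pow]
  exact Finset.prod_eq_zero (Finset.mem_range.2 h) (by rw [rad_of_ne_zero hx]; ring)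

lemma abs_dirichlet_le_mod {s : ℕ} {x : G2} (hx : x s ≠ 0) (n : ℕ) :
    |dirichlet n x| ≤ (n % 2 ^ (s + 1) : ℕ) := by
  suffices ∀ m, ∀ n < 2 ^ m, |dirichlet n x| ≤ (n % 2 ^ (s + 1) : ℕ) from
    this n n Nat.lt_two_pow_self
  intro m
  induction m with
  | zero => intro n hn; simp [show n = 0 by simpa using hn, dirichlet]
  | succ m ih =>
    intro n hn
    rcases lt_or_ge n (2 ^ m) with hnm | hnm
    · exact ih n hnm
    obtain ⟨j, rfl⟩ := Nat.exists_eq_add_of_le hnm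
    have hj : j < 2 ^ m := by rw [pow_succ] at hn; omega
    rw [dirichlet_two_pow_add hj.le]
    rcases le_or_gt m s with hms | hsm
    · have hn' : 2 ^ m + j < 2 ^ (s + 1) :=
        hn.trans_le (Nat.pow_le_pow_right two_pos (by omega))
      calc |dirichlet (2 ^ m) x + rad m x * dirichlet j x|
          ≤ |dirichlet (2 ^ m) x| + |dirichlet j x| := by
            simpa [abs_mul, abs_rad] using abs_add_le _ (rad m x * dirichlet j x)
        _ ≤ 2 ^ m + j := add_le_add (abs_dirichlet_two_pow_le m x)
            ((ih j hj).trans (by exact_mod_cast Nat.mod_le j _))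
        _ = ((2 ^ m + j) % 2 ^ (s + 1) : ℕ) := by rw [Nat.mod_eq_of_lt hn']; push_cast; rfl
    · obtain ⟨k, hk⟩ := Nat.pow_dvd_pow 2 (show s + 1 ≤ m by omega)
      rw [dirichlet_two_pow_eq_zero hsm hx, zero_add, abs_mul, abs_rad, one_mul, hk,
        Nat.mul_add_mod]
      exact ih j hj

lemma abs_dirichlet_le_two_pow {s : ℕ} {x : G2} (hx : x s ≠ 0) (n : ℕ) :
    |dirichlet n x| ≤ 2 ^ (s + 1) :=
  (abs_dirichlet_le_mod hx n).trans (by exact_mod_cast (Nat.mod_lt _ (by positivity)).le)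

instance : Measure.IsAddHaarMeasure muG := Measure.isAddHaarMeasure_addHaarMeasure _

instance : IsProbabilityMeasure muG := ⟨Measure.addHaarMeasure_self⟩

def cylProj (N : ℕ) : G2 →+ (Fin N → ZMod 2) :=
  AddMonoidHom.mk' (fun x i => x i) fun _ _ => rfl

lemma cyl_eq_ker (N : ℕ) : cyl N = ((cylProj N).ker : Set G2) := by
  ext x
  simp [cyl, cylProj, funext_iff, Fin.forall_iff]

lemma measurableSet_cyl (N : ℕ) : MeasurableSet (cyl N) := by
  simp only [cyl, Set.ofPred_forall]
  exact MeasurableSet.iInter fun i => MeasurableSet.iInter fun _ =>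
    measurableSet_eq_fun (measurable_pi_apply i) measurable_const

lemma index_ker_cylProj (N : ℕ) : (cylProj N).ker.index = 2 ^ N := by
  have hsurj : Function.Surjective (cylProj N) := fun v =>
    ⟨fun i => if h : i < N then v ⟨i, h⟩ else 0, funext fun i => by simp [cylProj]⟩
  rw [AddSubgroup.index_ker, AddMonoidHom.range_eq_top.2 hsurj]
  simp

lemma muG_cyl (N : ℕ) : muG (cyl N) = (2 ^ N)⁻¹ := by
  have : (cylProj N).ker.FiniteIndex := ⟨by simp [index_ker_cylProj]⟩
  have h := AddSubgroup.index_mul_measure (cylProj N).ker (cyl_eq_ker N ▸ measurableSet_cyl N) muG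
  rw [index_ker_cylProj, ← cyl_eq_ker, measure_univ] at h
  exact ENNReal.eq_inv_of_mul_eq_one_left (by simpa [mul_comm] using h)

lemma measureReal_cyl (N : ℕ) : muG.real (cyl N) = (2 ^ N)⁻¹ := by
  simp [measureReal_def, muG_cyl]

lemma apply_ne_zero_of_mem_cyl_diff {s : ℕ} {x : G2} (hx : x ∈ cyl s \ cyl (s + 1)) :
    x s ≠ 0 := fun hs =>
  hx.2 fun i hi => (Nat.lt_succ_iff_lt_or_eq.1 hi).elim (hx.1 i) (· ▸ hs)

theorem stmt2 :
    ∃ c : ℝ, 0 < c ∧ ∀ (n N s : ℕ) (x : G2), s < N → x ∈ cyl s \ cyl (s + 1) →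
      ∫ t in cyl N, |dirichlet n (x - t)| ∂muG ≤ c * 2 ^ s / 2 ^ N := by
  refine ⟨2, two_pos, fun n N s x hsN hx => ?_⟩
  have hbound : ∀ t ∈ cyl N, ‖|dirichlet n (x - t)|‖ ≤ 2 ^ (s + 1) := fun t ht => by
    rw [Real.norm_eq_abs, abs_abs]
    refine abs_dirichlet_le_two_pow ?_ n
    simpa [ht s hsN] using apply_ne_zero_of_mem_cyl_diff hx
  calc ∫ t in cyl N, |dirichlet n (x - t)| ∂muG
      ≤ ‖∫ t in cyl N, |dirichlet n (x - t)| ∂muG‖ := Real.le_norm_self _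
    _ ≤ 2 ^ (s + 1) * muG.real (cyl N) :=
        norm_setIntegral_le_of_norm_le_const (measure_lt_top _ _) hbound
    _ = 2 * 2 ^ s / 2 ^ N := by rw [measureReal_cyl, pow_succ]; ring

end
end

section
/- Let 0 < p < 1, f ∈ H_p(G), and 2^k < n ≤ 2^{k+1}. Then ‖S_n f − f‖_{H_p} ≤ c_p · n^{1/p − 1} · ω(1/2^k, f)_{H_p}, where ω(1/2^k, f)_{H_p} := ‖f − S_{2^k} f‖_{H_p} is the H_p-modulus of continuity. -/
open MeasureTheory ENNReal Filter
open scoped Classical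

noncomputable section

/-! Put `g = f - S_{2^k} f`. Beyond index `n` the coefficients of `f - S_n f` are those of `g`, so
`(f - S_n f)^* ≤ g^* + |S_n g|`, and it suffices to bound `∫ |S_n g|^p` by `n^{1-p} ∫ |S_{2^N} g|^p`
with `2^N ≥ n`. Flipping the coordinate `x_N` fixes `S_{2^N} g` and negates the upper half of
`S_{2^{N+1}} g`, so each half is an average of `S_{2^{N+1}} g` at two points; as `t ↦ t^p` is
subadditive and the Haar measure is translation invariant, each half costs a factor `2^{1-p}` in
`∫ |·|^p`. Splitting `S_n` along the binary digits of `n` gives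
`∫ |S_n g|^p ≤ 2 ∑_{i ≤ N} 2^{(1-p) i} ∫ |S_{2^N} g|^p`, a geometric sum of order `n^{1-p}`. -/

section Translation

variable {G : Type*} [AddGroup G] [MeasurableSpace G] [MeasurableAdd G] {μ : Measure G}
  [μ.IsAddRightInvariant]

lemma lintegral_rpow_le_of_le_half_add_translate {p : ℝ} (hp0 : 0 ≤ p) (hp1 : p ≤ 1)
    {F Q : G → ℝ≥0∞} (hQ : Measurable Q) (e : G) (hF : ∀ x, F x ≤ (Q x + Q (x + e)) / 2) :
    ∫⁻ x, F x ^ p ∂μ ≤ 2 ^ (1 - p) * ∫⁻ x, Q x ^ p ∂μ := by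
  have hQp : Measurable fun x => Q x ^ p := hQ.pow_const p
  have hpoint : ∀ x, F x ^ p ≤ 2⁻¹ ^ p * (Q x ^ p + Q (x + e) ^ p) := fun x =>
    calc F x ^ p ≤ (2⁻¹ * (Q x + Q (x + e))) ^ p := by
          rw [mul_comm, ← div_eq_mul_inv]; exact ENNReal.rpow_le_rpow (hF x) hp0
      _ = 2⁻¹ ^ p * (Q x + Q (x + e)) ^ p := ENNReal.mul_rpow_of_nonneg _ _ hp0
      _ ≤ 2⁻¹ ^ p * (Q x ^ p + Q (x + e) ^ p) := by
          gcongr; exact ENNReal.rpow_add_le_add_rpow _ _ hp0 hp1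
  calc ∫⁻ x, F x ^ p ∂μ ≤ ∫⁻ x, 2⁻¹ ^ p * (Q x ^ p + Q (x + e) ^ p) ∂μ := lintegral_mono hpoint
    _ = 2⁻¹ ^ p * (∫⁻ x, Q x ^ p ∂μ + ∫⁻ x, Q (x + e) ^ p ∂μ) := by
        rw [lintegral_const_mul' _ _ (by simp), lintegral_add_left hQp]
    _ = 2 ^ (1 - p) * ∫⁻ x, Q x ^ p ∂μ := by
        rw [lintegral_add_right_eq_self (fun x => Q x ^ p) e, ← two_mul, ← mul_assoc,
          ENNReal.inv_rpow, ← ENNReal.rpow_neg, sub_eq_neg_add,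
          ENNReal.rpow_add _ _ two_ne_zero ofNat_ne_top, ENNReal.rpow_one]

end Translation

namespace DyadicHardy

lemma rad_add (l : ℕ) (x y : G2) : rad l (x + y) = rad l x * rad l y := by
  rw [rad, rad, rad, Pi.add_apply, ZMod.val_add, ← neg_one_pow_eq_pow_mod_two, pow_add]

lemma rad_single_self (j : ℕ) : rad j (Pi.single j 1) = -1 := by
  simp [rad, ZMod.val_one]

lemma rad_single_of_ne {l j : ℕ} (h : l ≠ j) : rad l (Pi.single j 1) = 1 := by
  simp [rad, h]

lemma enorm_rad (l : ℕ) (x : G2) : ‖rad l x‖ₑ = 1 := by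
  simp [rad]

lemma walsh_add (n : ℕ) (x y : G2) : walsh n (x + y) = walsh n x * walsh n y := by
  simp only [walsh, ← Finset.prod_mul_distrib]
  refine Finset.prod_congr rfl fun l _ => ?_
  split_ifs <;> simp [rad_add]

lemma walsh_single_of_lt {s j : ℕ} (hs : s < 2 ^ j) : walsh s (Pi.single j 1) = 1 := by
  refine Finset.prod_eq_one fun l _ => ?_
  split_ifs with hl
  · exact rad_single_of_ne (Nat.pow_lt_pow_iff_right (by norm_num) |>.mp
      ((Nat.ge_two_pow_of_testBit hl).trans_lt hs)).ne
  · rfl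

lemma walsh_add_single_of_lt {s j : ℕ} (hs : s < 2 ^ j) (x : G2) :
    walsh s (x + Pi.single j 1) = walsh s x := by
  rw [walsh_add, walsh_single_of_lt hs, mul_one]

lemma walsh_eq_prod_range {n L : ℕ} (hn : n < 2 ^ L) (x : G2) :
    walsh n x = ∏ l ∈ Finset.range L, if n.testBit l then rad l x else 1 := by
  have extend : ∀ M, n < 2 ^ M → ∀ L', M ≤ L' →
      ∏ l ∈ Finset.range L', (if n.testBit l then rad l x else 1)
        = ∏ l ∈ Finset.range M, if n.testBit l then rad l x else 1 := by
    intro M hM L' hML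
    refine (Finset.prod_subset (Finset.range_subset_range.mpr hML) fun l _ hl => ?_).symm
    rw [Nat.testBit_lt_two_pow (hM.trans_le (Nat.pow_le_pow_right two_pos
      (not_lt.mp (Finset.mem_range.not.mp hl)))), if_neg Bool.false_ne_true]
  rw [walsh, ← extend n Nat.lt_two_pow_self _ (le_max_left n L),
    extend L hn _ (le_max_right n L)]

lemma walsh_two_pow_add {j s : ℕ} (hs : s < 2 ^ j) (x : G2) :
    walsh (2 ^ j + s) x = rad j x * walsh s x := by
  rw [walsh_eq_prod_range (L := j + 1) (by omega), walsh_eq_prod_range hs,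
    Finset.prod_range_succ, Nat.testBit_two_pow_add_eq, Nat.testBit_lt_two_pow hs, mul_comm]
  congr 1
  refine Finset.prod_congr rfl fun l hl => ?_
  rw [Nat.testBit_two_pow_add_gt (Finset.mem_range.mp hl)]

lemma measurable_walsh (n : ℕ) : Measurable (walsh n) :=
  Finset.measurable_prod _ fun l _ => by
    split_ifs
    · exact (measurable_from_top (f := fun v : ZMod 2 => (-1 : ℝ) ^ v.val)).comp
        (measurable_pi_apply l)
    · exact measurable_const

lemma measurable_mS (c : ℕ → ℝ) (m : ℕ) : Measurable (mS c m) :=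
  Finset.measurable_sum _ fun l _ => (measurable_walsh l).const_mul _

instance : muG.IsAddRightInvariant := by
  unfold muG; infer_instance

lemma mS_add_single_of_le (a : ℕ → ℝ) {m j : ℕ} (hm : m ≤ 2 ^ j) (x : G2) :
    mS a m (x + Pi.single j 1) = mS a m x :=
  Finset.sum_congr rfl fun s hs => by
    rw [walsh_add_single_of_lt ((Finset.mem_range.mp hs).trans_le hm)]

lemma mS_two_pow_add (a : ℕ → ℝ) {m j : ℕ} (hm : m ≤ 2 ^ j) (x : G2) :
    mS a (2 ^ j + m) x = mS a (2 ^ j) x + rad j x * mS (fun s => a (2 ^ j + s)) m x := by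
  rw [mS, Finset.sum_range_add, mS, mS, Finset.mul_sum]
  congr 1
  refine Finset.sum_congr rfl fun s hs => ?_
  rw [walsh_two_pow_add ((Finset.mem_range.mp hs).trans_le hm)]
  ring

lemma mS_two_pow_succ (a : ℕ → ℝ) (j : ℕ) (x : G2) :
    mS a (2 ^ (j + 1)) x = mS a (2 ^ j) x + rad j x * mS (fun s => a (2 ^ j + s)) (2 ^ j) x := by
  rw [pow_succ, mul_two, mS_two_pow_add a le_rfl]

/-- Flipping `x j` fixes the lower half of `mS a (2 ^ (j + 1))` and negates the upper half. -/
lemma mS_two_pow_eq_half (a : ℕ → ℝ) (j : ℕ) (x : G2) :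
    mS a (2 ^ j) x = (mS a (2 ^ (j + 1)) x + mS a (2 ^ (j + 1)) (x + Pi.single j 1)) / 2 := by
  rw [mS_two_pow_succ, mS_two_pow_succ, mS_add_single_of_le _ le_rfl, mS_add_single_of_le _ le_rfl,
    rad_add, rad_single_self]
  ring

lemma rad_mul_mS_two_pow_eq_half (a : ℕ → ℝ) (j : ℕ) (x : G2) :
    rad j x * mS (fun s => a (2 ^ j + s)) (2 ^ j) x
      = (mS a (2 ^ (j + 1)) x - mS a (2 ^ (j + 1)) (x + Pi.single j 1)) / 2 := by
  rw [mS_two_pow_succ, mS_two_pow_succ, mS_add_single_of_le _ le_rfl, mS_add_single_of_le _ le_rfl,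
    rad_add, rad_single_self]
  ring

lemma enorm_half_add_le (u v : ℝ) : ‖(u + v) / 2‖ₑ ≤ (‖u‖ₑ + ‖v‖ₑ) / 2 := by
  have h2 : ‖(2 : ℝ)‖ₑ = 2 := by rw [Real.enorm_eq_ofReal zero_le_two]; simp
  rw [div_eq_mul_inv, enorm_mul, enorm_inv two_ne_zero, h2, ← div_eq_mul_inv]
  gcongr
  exact enorm_add_le u v

lemma enorm_half_sub_le (u v : ℝ) : ‖(u - v) / 2‖ₑ ≤ (‖u‖ₑ + ‖v‖ₑ) / 2 := by
  simpa [sub_eq_add_neg] using enorm_half_add_le u (-v)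

lemma lintegral_enorm_mS_two_pow_le {p : ℝ} (hp0 : 0 ≤ p) (hp1 : p ≤ 1) (a : ℕ → ℝ) (j : ℕ) :
    ∫⁻ x, ‖mS a (2 ^ j) x‖ₑ ^ p ∂muG ≤ 2 ^ (1 - p) * ∫⁻ x, ‖mS a (2 ^ (j + 1)) x‖ₑ ^ p ∂muG :=
  lintegral_rpow_le_of_le_half_add_translate hp0 hp1 (measurable_mS a _).enorm (Pi.single j 1)
    fun x => by rw [mS_two_pow_eq_half]; exact enorm_half_add_le _ _

lemma lintegral_enorm_mS_shift_two_pow_le {p : ℝ} (hp0 : 0 ≤ p) (hp1 : p ≤ 1) (a : ℕ → ℝ)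
    (j : ℕ) :
    ∫⁻ x, ‖mS (fun s => a (2 ^ j + s)) (2 ^ j) x‖ₑ ^ p ∂muG
      ≤ 2 ^ (1 - p) * ∫⁻ x, ‖mS a (2 ^ (j + 1)) x‖ₑ ^ p ∂muG :=
  lintegral_rpow_le_of_le_half_add_translate hp0 hp1 (measurable_mS a _).enorm (Pi.single j 1)
    fun x => by
      rw [← one_mul ‖mS _ _ x‖ₑ, ← enorm_rad j x, ← enorm_mul, rad_mul_mS_two_pow_eq_half]
      exact enorm_half_sub_le _ _

def dyadicConst (p : ℝ) (N : ℕ) : ℝ := 2 * ∑ i ∈ Finset.range (N + 1), ((2 : ℝ) ^ (1 - p)) ^ i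

lemma dyadicConst_nonneg (p : ℝ) (N : ℕ) : 0 ≤ dyadicConst p N := by
  unfold dyadicConst; positivity

lemma dyadicConst_mul_add_le {p : ℝ} (hp : 0 ≤ p) (N : ℕ) :
    dyadicConst p N * 2 ^ (1 - p) + 2 ^ (1 - p) ≤ dyadicConst p (N + 1) := by
  have hq : (2 : ℝ) ^ (1 - p) ≤ 2 := by
    simpa using Real.rpow_le_rpow_of_exponent_le one_le_two (by linarith : 1 - p ≤ 1)
  rw [dyadicConst, dyadicConst, Finset.sum_range_succ' _ (N + 1), mul_assoc, Finset.sum_mul]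
  simp only [pow_succ, pow_zero]
  linarith

lemma enorm_mS_two_pow_add_rpow_le {p : ℝ} (hp0 : 0 ≤ p) (hp1 : p ≤ 1) (a : ℕ → ℝ) {m j : ℕ}
    (hm : m ≤ 2 ^ j) (x : G2) :
    ‖mS a (2 ^ j + m) x‖ₑ ^ p
      ≤ ‖mS a (2 ^ j) x‖ₑ ^ p + ‖mS (fun s => a (2 ^ j + s)) m x‖ₑ ^ p := by
  refine (ENNReal.rpow_le_rpow ?_ hp0).trans (ENNReal.rpow_add_le_add_rpow _ _ hp0 hp1)
  rw [mS_two_pow_add a hm]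
  refine (enorm_add_le _ _).trans ?_
  rw [enorm_mul, enorm_rad, one_mul]

lemma lintegral_enorm_mS_rpow_le {p : ℝ} (hp0 : 0 < p) (hp1 : p ≤ 1) (N : ℕ) (a : ℕ → ℝ)
    {n : ℕ} (hn : n ≤ 2 ^ N) :
    ∫⁻ x, ‖mS a n x‖ₑ ^ p ∂muG
      ≤ ENNReal.ofReal (dyadicConst p N) * ∫⁻ x, ‖mS a (2 ^ N) x‖ₑ ^ p ∂muG := by
  induction N generalizing a n with
  | zero =>
    obtain rfl | rfl : n = 0 ∨ n = 1 := by omega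
    · simp [mS, ENNReal.zero_rpow_of_pos hp0]
    · refine le_mul_of_one_le_left zero_le ?_
      simp [dyadicConst]
  | succ N ih =>
    have hq : (2 : ℝ≥0∞) ^ (1 - p) = ENNReal.ofReal (2 ^ (1 - p)) := by
      rw [← ENNReal.ofReal_rpow_of_pos two_pos, ENNReal.ofReal_ofNat]
    have hC := dyadicConst_nonneg p N
    set T := ∫⁻ x, ‖mS a (2 ^ (N + 1)) x‖ₑ ^ p ∂muG
    have hlow := lintegral_enorm_mS_two_pow_le hp0.le hp1 a N
    rw [hq] at hlow
    have hfinal : ENNReal.ofReal (dyadicConst p N * 2 ^ (1 - p) + 2 ^ (1 - p)) * T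
        ≤ ENNReal.ofReal (dyadicConst p (N + 1)) * T := by
      gcongr; exact dyadicConst_mul_add_le hp0.le N
    rcases le_or_gt n (2 ^ N) with hnN | hNn
    · calc ∫⁻ x, ‖mS a n x‖ₑ ^ p ∂muG
          ≤ ENNReal.ofReal (dyadicConst p N) * (ENNReal.ofReal (2 ^ (1 - p)) * T) :=
            (ih a hnN).trans (by gcongr)
        _ ≤ ENNReal.ofReal (dyadicConst p N * 2 ^ (1 - p) + 2 ^ (1 - p)) * T := by
            rw [← mul_assoc, ← ENNReal.ofReal_mul hC]
            gcongr
            exact le_add_of_nonneg_right (by positivity)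
        _ ≤ _ := hfinal
    · obtain ⟨m, rfl⟩ : ∃ m, n = 2 ^ N + m := ⟨n - 2 ^ N, by omega⟩
      have hm : m ≤ 2 ^ N := by rw [pow_succ] at hn; omega
      have hhigh := lintegral_enorm_mS_shift_two_pow_le hp0.le hp1 a N
      rw [hq] at hhigh
      calc ∫⁻ x, ‖mS a (2 ^ N + m) x‖ₑ ^ p ∂muG
          ≤ ∫⁻ x, ‖mS a (2 ^ N) x‖ₑ ^ p + ‖mS (fun s => a (2 ^ N + s)) m x‖ₑ ^ p ∂muG :=
            lintegral_mono (enorm_mS_two_pow_add_rpow_le hp0.le hp1 a hm)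
        _ = ∫⁻ x, ‖mS a (2 ^ N) x‖ₑ ^ p ∂muG
              + ∫⁻ x, ‖mS (fun s => a (2 ^ N + s)) m x‖ₑ ^ p ∂muG :=
            lintegral_add_left ((measurable_mS a _).enorm.pow_const p) _
        _ ≤ ENNReal.ofReal (2 ^ (1 - p)) * T
              + ENNReal.ofReal (dyadicConst p N) * (ENNReal.ofReal (2 ^ (1 - p)) * T) :=
            add_le_add hlow ((ih _ hm).trans (by gcongr))
        _ = ENNReal.ofReal (dyadicConst p N * 2 ^ (1 - p) + 2 ^ (1 - p)) * T := by
            rw [ENNReal.ofReal_add (by positivity) (by positivity), ENNReal.ofReal_mul hC]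
            ring
        _ ≤ _ := hfinal

/-- The coefficients of `f - S_n f`. -/
def tail (n : ℕ) (c : ℕ → ℝ) : ℕ → ℝ := fun j => if j < n then 0 else c j

lemma tail_tail_of_le {m n : ℕ} (h : m ≤ n) (c : ℕ → ℝ) : tail n (tail m c) = tail n c := by
  funext j
  simp only [tail]
  split_ifs <;> first | rfl | omega

lemma mS_tail_of_le (c : ℕ → ℝ) {n m : ℕ} (h : n ≤ m) (x : G2) :
    mS (tail n c) m x = mS c m x - mS c n x := by
  rw [mS, mS, mS, ← Finset.sum_range_add_sum_Ico _ h, ← Finset.sum_range_add_sum_Ico _ h,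
    Finset.sum_eq_zero fun j hj => by simp [tail, Finset.mem_range.mp hj]]
  simp only [zero_add, add_sub_cancel_left]
  refine Finset.sum_congr rfl fun j hj => ?_
  simp [tail, (Finset.mem_Ico.mp hj).1]

lemma mS_tail_of_ge (c : ℕ → ℝ) {n m : ℕ} (h : m ≤ n) (x : G2) : mS (tail n c) m x = 0 :=
  Finset.sum_eq_zero fun j hj => by
    simp [tail, (Finset.mem_range.mp hj).trans_le h]

lemma enorm_mS_two_pow_le_mMax (c : ℕ → ℝ) (N : ℕ) (x : G2) : ‖mS c (2 ^ N) x‖ₑ ≤ mMax c x :=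
  le_iSup (fun m => (‖mS c (2 ^ m) x‖₊ : ℝ≥0∞)) N

lemma measurable_mMax (c : ℕ → ℝ) : Measurable (mMax c) :=
  Measurable.iSup fun _ => (measurable_mS c _).enorm

lemma mMax_tail_le (c : ℕ → ℝ) (n : ℕ) (x : G2) :
    mMax (tail n c) x ≤ mMax c x + ‖mS c n x‖ₑ := by
  refine iSup_le fun m => ?_
  rcases le_total n (2 ^ m) with h | h
  · rw [← enorm_eq_nnnorm, mS_tail_of_le c h]
    exact enorm_sub_le.trans (by gcongr; exact enorm_mS_two_pow_le_mMax c m x)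
  · simp [mS_tail_of_ge c h]

lemma lintegral_mMax_tail_rpow_le {p : ℝ} (hp0 : 0 < p) (hp1 : p ≤ 1) (c : ℕ → ℝ) {n N : ℕ}
    (hn : n ≤ 2 ^ N) :
    ∫⁻ x, mMax (tail n c) x ^ p ∂muG
      ≤ ENNReal.ofReal (1 + dyadicConst p N) * ∫⁻ x, mMax c x ^ p ∂muG := by
  set M := ∫⁻ x, mMax c x ^ p ∂muG
  have hpoint : ∀ x, mMax (tail n c) x ^ p ≤ mMax c x ^ p + ‖mS c n x‖ₑ ^ p := fun x =>
    (ENNReal.rpow_le_rpow (mMax_tail_le c n x) hp0.le).trans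
      (ENNReal.rpow_add_le_add_rpow _ _ hp0.le hp1)
  have hpartial : ∫⁻ x, ‖mS c n x‖ₑ ^ p ∂muG ≤ ENNReal.ofReal (dyadicConst p N) * M :=
    (lintegral_enorm_mS_rpow_le hp0 hp1 N c hn).trans <| mul_le_mul_right (lintegral_mono fun x =>
      ENNReal.rpow_le_rpow (enorm_mS_two_pow_le_mMax c N x) hp0.le) _
  calc ∫⁻ x, mMax (tail n c) x ^ p ∂muG
      ≤ ∫⁻ x, mMax c x ^ p + ‖mS c n x‖ₑ ^ p ∂muG := lintegral_mono hpoint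
    _ = M + ∫⁻ x, ‖mS c n x‖ₑ ^ p ∂muG :=
        lintegral_add_left ((measurable_mMax c).pow_const p) _
    _ ≤ M + ENNReal.ofReal (dyadicConst p N) * M := by gcongr
    _ = ENNReal.ofReal (1 + dyadicConst p N) * M := by
        rw [ENNReal.ofReal_add zero_le_one (dyadicConst_nonneg p N), ENNReal.ofReal_one]
        ring

lemma mHp_le_of_lintegral_le {p : ℝ} (hp : 0 < p) {c c' : ℕ → ℝ} {B : ℝ} (hB : 0 ≤ B)
    (h : ∫⁻ x, mMax c' x ^ p ∂muG ≤ ENNReal.ofReal B * ∫⁻ x, mMax c x ^ p ∂muG) :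
    mHp p c' ≤ ENNReal.ofReal (B ^ (1 / p)) * mHp p c := by
  have hp' : 0 ≤ 1 / p := by positivity
  rw [mHp, mHp, ← ENNReal.ofReal_rpow_of_nonneg hB hp', ← ENNReal.mul_rpow_of_nonneg _ _ hp']
  exact ENNReal.rpow_le_rpow h hp'

lemma one_add_dyadicConst_le {p : ℝ} (hp : p < 1) {k n : ℕ} (hkn : 2 ^ k ≤ n) :
    1 + dyadicConst p (k + 1)
      ≤ (1 + 2 * (2 ^ (1 - p)) ^ 2 / (2 ^ (1 - p) - 1)) * (n : ℝ) ^ (1 - p) := by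
  set q : ℝ := 2 ^ (1 - p)
  have hq : 1 < q := Real.one_lt_rpow one_lt_two (by linarith)
  have hqk : q ^ k ≤ (n : ℝ) ^ (1 - p) := by
    rw [← Real.rpow_natCast, ← Real.rpow_mul zero_le_two, mul_comm, Real.rpow_mul zero_le_two]
    gcongr
    exact_mod_cast hkn
  have hn1 : 1 ≤ (n : ℝ) ^ (1 - p) :=
    Real.one_le_rpow (by exact_mod_cast Nat.one_le_two_pow.trans hkn) (by linarith)
  have hgeom : dyadicConst p (k + 1) ≤ 2 * q ^ 2 / (q - 1) * q ^ k := by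
    rw [dyadicConst, geom_sum_eq hq.ne', div_mul_eq_mul_div, mul_assoc, ← pow_add, mul_div_assoc]
    gcongr
    rw [add_comm 2 k]; linarith
  nlinarith [div_nonneg (by positivity : 0 ≤ 2 * q ^ 2) (by linarith : 0 ≤ q - 1)]

end DyadicHardy

open DyadicHardy in
theorem stmt13 (p : ℝ) (hp : 0 < p) (hp1 : p < 1) :
    ∃ c : ℝ, 0 < c ∧ ∀ (f : ℕ → ℝ) (k n : ℕ), 2 ^ k < n → n ≤ 2 ^ (k + 1) →
      mHp p (fun j => if j < n then 0 else f j) ≤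
        ENNReal.ofReal (c * (n : ℝ) ^ (1 / p - 1)) *
          mHp p (fun j => if j < 2 ^ k then 0 else f j) := by
  set A : ℝ := 1 + 2 * (2 ^ (1 - p)) ^ 2 / (2 ^ (1 - p) - 1)
  have hA : 0 < A := by
    have : (1 : ℝ) < 2 ^ (1 - p) := Real.one_lt_rpow one_lt_two (by linarith)
    positivity
  refine ⟨A ^ (1 / p), by positivity, fun f k n hkn hnk => ?_⟩
  have hbound : ∫⁻ x, mMax (tail n (tail (2 ^ k) f)) x ^ p ∂muG
      ≤ ENNReal.ofReal (A * (n : ℝ) ^ (1 - p)) * ∫⁻ x, mMax (tail (2 ^ k) f) x ^ p ∂muG :=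
    (lintegral_mMax_tail_rpow_le hp hp1.le _ hnk).trans <| by
      gcongr; exact one_add_dyadicConst_le hp1 hkn.le
  have hexp : (A * (n : ℝ) ^ (1 - p)) ^ (1 / p) = A ^ (1 / p) * (n : ℝ) ^ (1 / p - 1) := by
    rw [Real.mul_rpow hA.le (by positivity), ← Real.rpow_mul (Nat.cast_nonneg n)]
    congr 2
    field_simp
  rw [tail_tail_of_le hkn.le] at hbound
  rw [← hexp]
  exact mHp_le_of_lintegral_le hp (by positivity) hbound

end
end
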